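/- arXiv:1303.6976 — 2 statements merged into one kernel-verified Lean document; each statement's English description precedes it below -/
import Mathlib

section
/- Let G = (G_i, P_i)_{i∈I} be a qualitative game where each G_i is a nonempty compact subset of a Hausdorff topological vector space, each P_i has open lower sections (P_i⁻¹(y_i) = {x : y_i ∈ P_i(x)} is open for each y_i) and convex values, and x_i ∉ P_i(x) for all x. Then for any fast →-reduction step G → H, each surviving set H_i = {x_i ∈ G_i : ⋂_{x_{-i} ∈ G_{-i}} P_i(x_i, x_{-i}) = ∅} is closed in G_i, hence compact. Moreover H_i is nonempty, provided that whenever some strategy is strictly dominated, there exists an undominated dominator (Condition C at stage 0). -/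
/-!
Fix `yᵢ`. Since `G₋ᵢ` is compact and `{x | yᵢ ∈ Pᵢ(x)}` is open, the tube lemma shows that the
set of strategies `xᵢ` strictly dominated by `yᵢ` is open. The strictly dominated strategies are
the union of these open sets over `yᵢ`, so the survivors form a closed subset of the compact
set `Gᵢ`. If some strategy in `Gᵢ` is dominated, Condition C provides an undominated dominator,
which lies in `Gᵢ` because `Pᵢ` takes values in `Gᵢ`.
-/

/-- The set `⋂_{x_{-i} ∈ S_{-i}} P_i(x_i, x_{-i})` of common dominators of
strategy `xi` of player `i` relative to the family of strategy sets `S`. -/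
def domSet {I : Type*} [DecidableEq I] {E : I → Type*}
    (P : ∀ i, (∀ j, E j) → Set (E i)) (S : ∀ i, Set (E i)) (i : I) (xi : E i) :
    Set (E i) :=
  ⋂ x ∈ {x : ∀ j, E j | ∀ j, j ≠ i → x j ∈ S j}, P i (Function.update x i xi)

open Function Set Filter Topology

section

variable {I : Type*} [DecidableEq I] {E : I → Type*} {P : ∀ i, (∀ j, E j) → Set (E i)}
  {S : ∀ i, Set (E i)} {i : I} {xi yi : E i}

theorem mem_domSet : yi ∈ domSet P S i xi ↔
    ∀ x : ∀ j, E j, (∀ j, j ≠ i → x j ∈ S j) → yi ∈ P i (update x i xi) := by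
  simp [domSet]

/-- The free coordinate `i` may be pinned to any `c`, which turns the range of `x₋ᵢ` into a box. -/
theorem mem_domSet_iff_forall_mem_pi (c : E i) : yi ∈ domSet P S i xi ↔
    ∀ x ∈ univ.pi (update S i {c}), yi ∈ P i (update x i xi) := by
  rw [mem_domSet]
  constructor
  · intro h x hx
    exact h x fun j hj => by simpa [update_of_ne hj] using hx j (mem_univ j)
  · intro h x hx
    have hpin : update x i c ∈ univ.pi (update S i {c}) := by
      intro j _
      rcases eq_or_ne j i with rfl | hj
      · simp
      · simpa [update_of_ne hj] using hx j hj
    simpa using h _ hpin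

theorem domSet_subset (hP : ∀ x, P i x ⊆ S i) (hS : ∀ j, (S j).Nonempty) :
    domSet P S i xi ⊆ S i := fun _ hy =>
  hP _ (mem_domSet.mp hy (fun j => (hS j).some) fun j _ => (hS j).some_mem)

variable [∀ i, TopologicalSpace (E i)]

theorem isOpen_setOf_mem_domSet (hS : ∀ j, IsCompact (S j))
    (hP : IsOpen {x : ∀ j, E j | yi ∈ P i x}) : IsOpen {xi | yi ∈ domSet P S i xi} := by
  have hbox : IsCompact (univ.pi (update S i {yi})) := by
    refine isCompact_univ_pi fun j => ?_
    rcases eq_or_ne j i with rfl | hj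
    · simp
    · simpa [update_of_ne hj] using hS j
  have htube : IsOpen {p : E i × (∀ j, E j) | yi ∈ P i (update p.2 i p.1)} :=
    hP.preimage (continuous_snd.update i continuous_fst)
  simp only [mem_domSet_iff_forall_mem_pi yi, isOpen_iff_eventually]
  exact fun xi hxi => hbox.eventually_forall_of_forall_eventually fun x hx =>
    htube.eventually_mem (hxi x hx)

theorem isClosed_setOf_domSet_eq_empty [T2Space (E i)] (hS : ∀ j, IsCompact (S j))
    (hP : ∀ yi, IsOpen {x : ∀ j, E j | yi ∈ P i x}) :
    IsClosed {xi ∈ S i | domSet P S i xi = ∅} := by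
  have hdominated : {xi | domSet P S i xi = ∅}ᶜ = ⋃ yi, {xi | yi ∈ domSet P S i xi} := by
    ext xi
    simp [← nonempty_iff_ne_empty, Set.Nonempty]
  have hsurvivors : IsClosed {xi | domSet P S i xi = ∅} := by
    rw [← isOpen_compl_iff, hdominated]
    exact isOpen_iUnion fun yi => isOpen_setOf_mem_domSet hS (hP yi)
  exact (hS i).isClosed.inter hsurvivors

end

theorem stmt_13_general {I : Type*} [DecidableEq I] {E : I → Type*}
    [∀ i, TopologicalSpace (E i)] [∀ i, T2Space (E i)]
    (G : ∀ i, Set (E i))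
    (hGc : ∀ i, IsCompact (G i)) (hGne : ∀ i, (G i).Nonempty)
    (P : ∀ i, (∀ j, E j) → Set (E i))
    (hPval : ∀ i (x : ∀ j, E j), P i x ⊆ G i)
    (hopen : ∀ i (yi : E i), IsOpen {x : ∀ j, E j | yi ∈ P i x})
    -- Condition C at stage 0
    (hC : ∀ i, ∀ xi ∈ G i, (domSet P G i xi).Nonempty →
      ∃ xs, xs ∈ domSet P G i xi ∧ domSet P G i xs = ∅) :
    ∀ i, IsClosed {xi ∈ G i | domSet P G i xi = ∅} ∧
      IsCompact {xi ∈ G i | domSet P G i xi = ∅} ∧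
      {xi ∈ G i | domSet P G i xi = ∅}.Nonempty := by
  intro i
  have hclosed := isClosed_setOf_domSet_eq_empty hGc (hopen i)
  refine ⟨hclosed, (hGc i).of_isClosed_subset hclosed (sep_subset _ _), ?_⟩
  obtain ⟨xi, hxi⟩ := hGne i
  by_cases hundominated : domSet P G i xi = ∅
  · exact ⟨xi, hxi, hundominated⟩
  · obtain ⟨xs, hxs, hxs_undominated⟩ := hC i xi hxi (nonempty_iff_ne_empty.mpr hundominated)
    exact ⟨xs, domSet_subset (hPval i) hGne hxs, hxs_undominated⟩

/-- For a qualitative game with nonempty compact strategy sets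
`G_i` in Hausdorff topological vector spaces, preferences with open lower
sections and convex values, and `x_i ∉ P_i(x)`, for a fast `→`-step `G → H`
each surviving set `H_i = {x_i ∈ G_i : ⋂_{x_{-i} ∈ G_{-i}} P_i(x_i,x_{-i}) = ∅}`
is closed (in `G_i`), hence compact; moreover `H_i` is nonempty, provided
every strictly dominated strategy has an undominated dominator (Condition C). -/
theorem stmt_13 {I : Type*} [DecidableEq I] {E : I → Type*}
    [∀ i, AddCommGroup (E i)] [∀ i, Module ℝ (E i)]
    [∀ i, TopologicalSpace (E i)] [∀ i, T2Space (E i)]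
    [∀ i, IsTopologicalAddGroup (E i)] [∀ i, ContinuousSMul ℝ (E i)]
    (G : ∀ i, Set (E i))
    (hGc : ∀ i, IsCompact (G i)) (hGne : ∀ i, (G i).Nonempty)
    (P : ∀ i, (∀ j, E j) → Set (E i))
    (hPval : ∀ i (x : ∀ j, E j), P i x ⊆ G i)
    (hopen : ∀ i (yi : E i), IsOpen {x : ∀ j, E j | yi ∈ P i x})
    (hconv : ∀ i (x : ∀ j, E j), Convex ℝ (P i x))
    (hirr : ∀ i (x : ∀ j, E j), x i ∉ P i x)
    -- Condition C at stage 0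
    (hC : ∀ i, ∀ xi ∈ G i, (domSet P G i xi).Nonempty →
      ∃ xs, xs ∈ domSet P G i xi ∧ domSet P G i xs = ∅) :
    ∀ i, IsClosed {xi ∈ G i | domSet P G i xi = ∅} ∧
      IsCompact {xi ∈ G i | domSet P G i xi = ∅} ∧
      {xi ∈ G i | domSet P G i xi = ∅}.Nonempty :=
  stmt_13_general G hGc hGne P hPval hopen hC
end

section
/- Let G = (G_i, P_i)_{i∈I} with each G_i a nonempty compact subset of a Hausdorff topological vector space, each P_i with open lower sections, x_i ∉ P_i(x) for all x, and suppose each R^t in the unique fast →-reduction sequence R⁰ = G, R^t → R^{t+1} fast, has nonempty compact components R^t_i with M_i = ⋂_t R^t_i. Then M = (M_i) is a maximal reduction: for all i, x_i ∈ M_i, and y_i ∈ M_i, we have y_i ∉ ⋂_{x_{-i} ∈ M_{-i}} P_i(x_i, x_{-i}); moreover each M_i is nonempty and compact. -/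
namespace domSet

open Set Function

variable {I : Type*} {E : I → Type*}
  (P : ∀ i, (∀ j, E j) → Set (E i)) (S : ∀ i, Set (E i)) (i : I) (xi yi : E i)

def nonDominatingProfiles : Set (∀ j, E j) :=
  {x | (∀ j, j ≠ i → x j ∈ S j) ∧ x i = xi ∧ yi ∉ P i x}

theorem notMem_iff_nonempty_nonDominatingProfiles [DecidableEq I] :
    yi ∉ domSet P S i xi ↔ (nonDominatingProfiles P S i xi yi).Nonempty := by
  simp only [domSet, mem_iInter₂, not_forall, mem_ofPred_eq]
  constructor
  · rintro ⟨x, hx, hyi⟩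
    exact ⟨update x i xi, fun j hj => (update_of_ne hj xi x).symm ▸ hx j hj,
      update_self i xi x, hyi⟩
  · rintro ⟨x, hx, rfl, hyi⟩
    exact ⟨x, hx, by rwa [update_eq_self]⟩

variable {P S i xi yi}

theorem nonDominatingProfiles_mono {S' : ∀ i, Set (E i)} (h : ∀ j, S j ⊆ S' j) :
    nonDominatingProfiles P S i xi yi ⊆ nonDominatingProfiles P S' i xi yi :=
  fun _ ⟨hx, hxi, hyi⟩ => ⟨fun j hj => h j (hx j hj), hxi, hyi⟩

theorem isCompact_nonDominatingProfiles [DecidableEq I] [∀ i, TopologicalSpace (E i)]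
    (hS : ∀ j, IsCompact (S j)) (hopen : IsOpen {x : ∀ j, E j | yi ∈ P i x}) :
    IsCompact (nonDominatingProfiles P S i xi yi) := by
  have h : nonDominatingProfiles P S i xi yi =
      pi univ (update S i {xi}) ∩ {x | yi ∈ P i x}ᶜ := by
    ext x
    simp only [nonDominatingProfiles, mem_pi, mem_univ, true_implies, mem_inter_iff,
      mem_compl_iff, mem_ofPred_eq]
    constructor
    · rintro ⟨hx, rfl, hyi⟩
      refine ⟨fun j => ?_, hyi⟩
      rcases eq_or_ne j i with rfl | hj
      · simp
      · simpa [hj] using hx j hj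
    · rintro ⟨hx, hyi⟩
      exact ⟨fun j hj => by simpa [hj] using hx j, by simpa using hx i, hyi⟩
  rw [h]
  refine (isCompact_univ_pi fun j => ?_).inter_right hopen.isClosed_compl
  rcases eq_or_ne j i with rfl | hj
  · simp
  · simpa [hj] using hS j

theorem notMem_iInter [DecidableEq I] [∀ i, TopologicalSpace (E i)] [∀ i, T2Space (E i)]
    {R : ℕ → ∀ i, Set (E i)} (hR : ∀ t j, R (t + 1) j ⊆ R t j)
    (hRc : ∀ t j, IsCompact (R t j)) (hopen : IsOpen {x : ∀ j, E j | yi ∈ P i x})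
    (hyi : ∀ t, yi ∉ domSet P (R t) i xi) :
    yi ∉ domSet P (fun j => ⋂ t, R t j) i xi := by
  simp only [notMem_iff_nonempty_nonDominatingProfiles] at hyi ⊢
  have hcompact t := isCompact_nonDominatingProfiles (xi := xi) (hRc t) hopen
  obtain ⟨x, hx⟩ := IsCompact.nonempty_iInter_of_sequence_nonempty_isCompact_isClosed _
    (fun t => nonDominatingProfiles_mono (hR t)) hyi (hcompact 0) fun t => (hcompact t).isClosed
  have hx := mem_iInter.1 hx
  exact ⟨x, fun j hj => mem_iInter.2 fun t => (hx t).1 j hj, (hx 0).2⟩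

end domSet

open Set in
theorem stmt_14_general {I : Type*} [DecidableEq I] {E : I → Type*}
    [∀ i, TopologicalSpace (E i)] [∀ i, T2Space (E i)]
    (P : ∀ i, (∀ j, E j) → Set (E i))
    (hopen : ∀ i (yi : E i), IsOpen {x : ∀ j, E j | yi ∈ P i x})
    -- the unique fast `→`-reduction sequence
    (R : ℕ → ∀ i, Set (E i))
    (hRf : ∀ t i, R (t + 1) i = {xi ∈ R t i | ¬ (domSet P (R t) i xi).Nonempty})
    (hRc : ∀ t i, IsCompact (R t i)) (hRne : ∀ t i, (R t i).Nonempty)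
    (M : ∀ i, Set (E i)) (hM : ∀ i, M i = ⋂ t, R t i) :
    ∀ i, (M i).Nonempty ∧ IsCompact (M i) ∧
      ∀ xi ∈ M i, ∀ yi ∈ M i, yi ∉ domSet P M i xi := by
  have hR t j : R (t + 1) j ⊆ R t j := by rw [hRf]; exact sep_subset _ _
  have hRcl t j : IsClosed (R t j) := (hRc t j).isClosed
  intro i
  refine ⟨hM i ▸ IsCompact.nonempty_iInter_of_sequence_nonempty_isCompact_isClosed _
      (fun t => hR t i) (fun t => hRne t i) (hRc 0 i) (fun t => hRcl t i),
    hM i ▸ (hRc 0 i).of_isClosed_subset (isClosed_iInter fun t => hRcl t i) (iInter_subset _ 0),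
    fun xi hxi yi _ => ?_⟩
  rw [funext hM]
  refine domSet.notMem_iInter hR hRc (hopen i yi) fun t hdom => ?_
  have hxi' : xi ∈ R (t + 1) i := mem_iInter.1 (hM i ▸ hxi) (t + 1)
  rw [hRf] at hxi'
  exact hxi'.2 ⟨yi, hdom⟩

/-- For a qualitative game with nonempty compact strategy sets
`G_i` in Hausdorff topological vector spaces, preferences with open lower
sections, `x_i ∉ P_i(x)`, if each stage `R^t` of the unique fast `→`-reduction
sequence has nonempty compact components, then `M_i = ⋂_t R^t_i` is nonempty
and compact, and `M` is a maximal reduction: no `x_i ∈ M_i` is strictly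
dominated by any `y_i ∈ M_i` relative to `M`. -/
theorem stmt_14 {I : Type*} [DecidableEq I] {E : I → Type*}
    [∀ i, AddCommGroup (E i)] [∀ i, Module ℝ (E i)]
    [∀ i, TopologicalSpace (E i)] [∀ i, T2Space (E i)]
    [∀ i, IsTopologicalAddGroup (E i)] [∀ i, ContinuousSMul ℝ (E i)]
    (G : ∀ i, Set (E i))
    (hGc : ∀ i, IsCompact (G i)) (hGne : ∀ i, (G i).Nonempty)
    (P : ∀ i, (∀ j, E j) → Set (E i))
    (hopen : ∀ i (yi : E i), IsOpen {x : ∀ j, E j | yi ∈ P i x})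
    (hirr : ∀ i (x : ∀ j, E j), x i ∉ P i x)
    -- the unique fast `→`-reduction sequence
    (R : ℕ → ∀ i, Set (E i)) (hR0 : ∀ i, R 0 i = G i)
    (hRf : ∀ t i, R (t + 1) i = {xi ∈ R t i | ¬ (domSet P (R t) i xi).Nonempty})
    (hRc : ∀ t i, IsCompact (R t i)) (hRne : ∀ t i, (R t i).Nonempty)
    (M : ∀ i, Set (E i)) (hM : ∀ i, M i = ⋂ t, R t i) :
    ∀ i, (M i).Nonempty ∧ IsCompact (M i) ∧
      ∀ xi ∈ M i, ∀ yi ∈ M i, yi ∉ domSet P M i xi :=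
  stmt_14_general P hopen R hRf hRc hRne M hM
end
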